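/- The game chromatic number of the rook's graph K_3 □ K_3 with Bob moving first equals 4; that is, Alice has a winning strategy in the (1,1)-colouring game on K_3 □ K_3 with 4 colours when Bob moves first, and Bob has a winning strategy with 3 colours. -/

import Mathlib

variable {V : Type*} [Fintype V] [DecidableEq V]

/-- A partial colouring with palette `Fin k` is proper if adjacent vertices never
receive the same colour. -/
def ProperPartial {k : ℕ} (G : SimpleGraph V) (c : V → Option (Fin k)) : Prop :=
  ∀ v w, G.Adj v w → ∀ x, c v = some x → c w ≠ some x

/-- The number of uncoloured vertices. -/
def uncoloured {k : ℕ} (c : V → Option (Fin k)) : ℕ :=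
  (Finset.univ.filter fun v => c v = none).card

/-- A single move: properly colour one previously uncoloured vertex. -/
def GMove {k : ℕ} (G : SimpleGraph V) (c c' : V → Option (Fin k)) : Prop :=
  ∃ v x, c v = none ∧ c' = Function.update c v (some x) ∧ ProperPartial G c'

/-- A sequence of exactly `t` single moves. -/
def GMoveSeq {k : ℕ} (G : SimpleGraph V) :
    ℕ → (V → Option (Fin k)) → (V → Option (Fin k)) → Prop
  | 0, c, c' => c' = c
  | t + 1, c, c' => ∃ c'', GMove G c c'' ∧ GMoveSeq G t c'' c'

/-- A turn of a player who must colour `min t u` vertices, where `u` is the current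
number of uncoloured vertices. -/
def GTurn {k : ℕ} (G : SimpleGraph V) (t : ℕ) (c c' : V → Option (Fin k)) : Prop :=
  GMoveSeq G (min t (uncoloured c)) c c'

/-- `AliceWins G k a b turn c`: Alice has a winning strategy in the `(a,b)`-colouring
game on `G` with `k` colours from position `c`, where `turn = true` means it is
Alice's turn and `turn = false` means it is Bob's turn. Alice wins exactly when the
whole graph eventually gets coloured. -/
inductive AliceWins (G : SimpleGraph V) (k a b : ℕ) :
    Bool → (V → Option (Fin k)) → Prop
  | done (turn : Bool) (c : V → Option (Fin k)) :
      uncoloured c = 0 → AliceWins G k a b turn c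
  | aliceTurn (c c' : V → Option (Fin k)) : 0 < uncoloured c → GTurn G a c c' →
      AliceWins G k a b false c' → AliceWins G k a b true c
  | bobTurn (c : V → Option (Fin k)) : 0 < uncoloured c →
      (∃ c', GTurn G b c c') →
      (∀ c', GTurn G b c c' → AliceWins G k a b true c') →
      AliceWins G k a b false c

/-- The everywhere-uncoloured position. -/
def emptyCol (V : Type*) (k : ℕ) : V → Option (Fin k) := fun _ => none

/-- The rook's graph `K₃ □ K₃` (the Hamming graph `H₃,₃`). -/
def rook33 : SimpleGraph (Fin 3 × Fin 3) :=
  (⊤ : SimpleGraph (Fin 3)).boxProd (⊤ : SimpleGraph (Fin 3))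


/-!
Both halves are finite computations on the game tree. Automorphisms of `K₃ □ K₃` act
transitively on its vertices and the palette can be permuted freely, and both preserve who
wins; so Bob's opening move may be taken to be colour `0` at `(0, 0)`. From that position a
Boolean minimax evaluation of the game tree, proved to agree with `AliceWins` for the
`(1,1)`-game, is run in the kernel: Alice wins with four colours, and Bob wins with three.
-/

open Function SimpleGraph

section Moves

variable {α : Type*} {k : ℕ} {G : SimpleGraph α}

lemma properPartial_update_iff [DecidableEq α] {c : α → Option (Fin k)} {v : α} {x : Fin k}
    (hp : ProperPartial G c) (hv : c v = none) :
    ProperPartial G (update c v (some x)) ↔ ∀ w, G.Adj v w → c w ≠ some x := by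
  constructor
  · intro hp' w hadj hw
    have := hp' v w hadj x (update_self ..)
    rw [update_of_ne (G.ne_of_adj hadj).symm] at this
    exact this hw
  · intro h u w hadj y hu hw
    rcases eq_or_ne u v with rfl | huv
    · rw [update_self, Option.some_inj] at hu
      subst hu
      rw [update_of_ne (G.ne_of_adj hadj).symm] at hw
      exact h w hadj hw
    rw [update_of_ne huv] at hu
    rcases eq_or_ne w v with rfl | hwv
    · rw [update_self, Option.some_inj] at hw
      subst hw
      exact h u hadj.symm hu
    rw [update_of_ne hwv] at hw
    exact hp u w hadj y hu hw

lemma uncoloured_update_add_one [Fintype α] [DecidableEq α] {c : α → Option (Fin k)} {v : α}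
    {x : Fin k} (hv : c v = none) :
    uncoloured (update c v (some x)) + 1 = uncoloured c := by
  have hfilter : (Finset.univ.filter fun u => update c v (some x) u = none)
      = (Finset.univ.filter fun u => c u = none).erase v := by
    ext u
    rcases eq_or_ne u v with rfl | huv <;> simp [*]
  rw [uncoloured, uncoloured, hfilter, Finset.card_erase_add_one (by simpa)]

lemma GMove.properPartial [DecidableEq α] {c c' : α → Option (Fin k)} (h : GMove G c c') :
    ProperPartial G c' := by
  obtain ⟨_, _, _, _, hp⟩ := h
  exact hp

lemma GMove.uncoloured_add_one [Fintype α] [DecidableEq α] {c c' : α → Option (Fin k)}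
    (h : GMove G c c') : uncoloured c' + 1 = uncoloured c := by
  obtain ⟨v, x, hv, rfl, -⟩ := h
  exact uncoloured_update_add_one hv

lemma gTurn_one_iff [Fintype α] [DecidableEq α] {c c' : α → Option (Fin k)}
    (hu : 0 < uncoloured c) : GTurn G 1 c c' ↔ GMove G c c' := by
  rw [GTurn, Nat.min_eq_left hu]
  exact exists_eq_right'

lemma aliceWins_true_iff [Fintype α] [DecidableEq α] {a b : ℕ} {c : α → Option (Fin k)}
    (hu : 0 < uncoloured c) :
    AliceWins G k a b true c ↔ ∃ c', GTurn G a c c' ∧ AliceWins G k a b false c' := by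
  constructor
  · intro h
    cases h with
    | done _ _ h0 => omega
    | aliceTurn _ c' _ ht hw => exact ⟨c', ht, hw⟩
  · rintro ⟨c', ht, hw⟩
    exact .aliceTurn c c' hu ht hw

lemma aliceWins_false_iff [Fintype α] [DecidableEq α] {a b : ℕ} {c : α → Option (Fin k)}
    (hu : 0 < uncoloured c) :
    AliceWins G k a b false c ↔
      (∃ c', GTurn G b c c') ∧ ∀ c', GTurn G b c c' → AliceWins G k a b true c' := by
  constructor
  · intro h
    cases h with
    | done _ _ h0 => omega
    | bobTurn _ _ hex hall => exact ⟨hex, hall⟩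
  · rintro ⟨hex, hall⟩
    exact .bobTurn c hu hex hall

lemma uncoloured_emptyCol [Fintype α] [DecidableEq α] :
    uncoloured (emptyCol α k) = Fintype.card α := by
  simp [uncoloured, emptyCol]

lemma gMove_emptyCol [DecidableEq α] (v : α) (x : Fin k) :
    GMove G (emptyCol α k) (update (emptyCol α k) v (some x)) :=
  ⟨v, x, rfl, rfl, (properPartial_update_iff (by simp [ProperPartial, emptyCol]) rfl).2
    (by simp [emptyCol])⟩

end Moves

section Evaluation

variable {α : Type*} [DecidableEq α] {k : ℕ}

def canColour (nb : α → List α) (c : α → Option (Fin k)) (v : α) (x : Fin k) : Bool :=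
  (nb v).all fun w => decide (c w ≠ some x)

def nextPositions (l : List α) (nb : α → List α) (c : α → Option (Fin k)) :
    List (α → Option (Fin k)) :=
  (l.filter fun v => decide (c v = none)).flatMap fun v =>
    ((List.finRange k).filter (canColour nb c v)).map fun x => update c v (some x)

/-- Minimax evaluation of the `(1,1)`-game; `n` is the number of uncoloured vertices, so at
`0` the board is full and Alice has won. -/
def aliceWinsEval (l : List α) (nb : α → List α) : ℕ → Bool → (α → Option (Fin k)) → Bool
  | 0, _, _ => true
  | n + 1, true, c => (nextPositions l nb c).any (aliceWinsEval l nb n false)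
  | n + 1, false, c =>
      !(nextPositions l nb c).isEmpty && (nextPositions l nb c).all (aliceWinsEval l nb n true)

variable {G : SimpleGraph α} {l : List α} {nb : α → List α}

lemma mem_nextPositions_iff (hl : ∀ v, v ∈ l) (hnb : ∀ v w, w ∈ nb v ↔ G.Adj v w)
    {c c' : α → Option (Fin k)} (hp : ProperPartial G c) :
    c' ∈ nextPositions l nb c ↔ GMove G c c' := by
  simp only [nextPositions, canColour, List.mem_flatMap, List.mem_filter, List.mem_map,
    List.mem_finRange, List.all_eq_true, hnb, hl, decide_eq_true_eq, true_and]
  constructor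
  · rintro ⟨v, hv, x, hx, rfl⟩
    exact ⟨v, x, hv, rfl, (properPartial_update_iff hp hv).2 hx⟩
  · rintro ⟨v, x, hv, rfl, hp'⟩
    exact ⟨v, hv, x, (properPartial_update_iff hp hv).1 hp', rfl⟩

theorem aliceWinsEval_iff [Fintype α] (hl : ∀ v, v ∈ l) (hnb : ∀ v w, w ∈ nb v ↔ G.Adj v w) :
    ∀ (n : ℕ) (t : Bool) (c : α → Option (Fin k)), uncoloured c = n → ProperPartial G c →
      (aliceWinsEval l nb n t c = true ↔ AliceWins G k 1 1 t c)
  | 0, t, c, hc, _ => ⟨fun _ => .done t c hc, fun _ => rfl⟩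
  | n + 1, t, c, hc, hp => by
    have hu : 0 < uncoloured c := by omega
    have ih (t : Bool) {c' : α → Option (Fin k)} (h : GMove G c c') :
        aliceWinsEval l nb n t c' = true ↔ AliceWins G k 1 1 t c' :=
      aliceWinsEval_iff hl hnb n t c' (by have := h.uncoloured_add_one; omega) h.properPartial
    cases t
    · simp only [aliceWinsEval, Bool.and_eq_true, Bool.not_eq_eq_eq_not, Bool.not_true,
        List.isEmpty_eq_false_iff_exists_mem, List.all_eq_true, aliceWins_false_iff hu,
        gTurn_one_iff hu, mem_nextPositions_iff hl hnb hp]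
      exact and_congr_right fun _ => forall₂_congr fun _ h => ih true h
    · simp only [aliceWinsEval, List.any_eq_true, aliceWins_true_iff hu, gTurn_one_iff hu,
        mem_nextPositions_iff hl hnb hp]
      exact exists_congr fun _ => and_congr_right fun h => ih false h

end Evaluation

section Relabel

variable {α : Type*} {k : ℕ} {G : SimpleGraph α}

/-- Transport of a position along an automorphism `φ` of `G` and a permutation `π` of the
palette: the colour of `φ v` in the new position is `π` of the colour of `v`. -/
def relabel (φ : G ≃g G) (π : Equiv.Perm (Fin k)) (c : α → Option (Fin k)) :
    α → Option (Fin k) :=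
  Option.map π ∘ c ∘ φ.symm

lemma relabel_symm_relabel (φ : G ≃g G) (π : Equiv.Perm (Fin k)) (c : α → Option (Fin k)) :
    relabel φ.symm π.symm (relabel φ π c) = c := by
  funext v
  simp [relabel, Option.map_map]

lemma relabel_relabel_symm (φ : G ≃g G) (π : Equiv.Perm (Fin k)) (c : α → Option (Fin k)) :
    relabel φ π (relabel φ.symm π.symm c) = c := by
  simpa using relabel_symm_relabel φ.symm π.symm c

lemma relabel_update [DecidableEq α] (φ : G ≃g G) (π : Equiv.Perm (Fin k))
    (c : α → Option (Fin k)) (v : α) (x : Fin k) :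
    relabel φ π (update c v (some x)) = update (relabel φ π c) (φ v) (some (π x)) := by
  funext w
  rcases eq_or_ne w (φ v) with rfl | hw
  · simp [relabel]
  · have : φ.symm w ≠ v := fun h => hw (by rw [← h, RelIso.apply_symm_apply])
    simp [relabel, update_of_ne hw, update_of_ne this]

lemma relabel_emptyCol (φ : G ≃g G) (π : Equiv.Perm (Fin k)) :
    relabel φ π (emptyCol α k) = emptyCol α k :=
  rfl

lemma uncoloured_relabel [Fintype α] [DecidableEq α] (φ : G ≃g G) (π : Equiv.Perm (Fin k))
    (c : α → Option (Fin k)) : uncoloured (relabel φ π c) = uncoloured c :=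
  Finset.card_equiv φ.symm.toEquiv fun v => by simp [relabel]

lemma ProperPartial.relabel {c : α → Option (Fin k)} (hp : ProperPartial G c)
    (φ : G ≃g G) (π : Equiv.Perm (Fin k)) : ProperPartial G (relabel φ π c) := by
  intro u w hadj y hu hw
  simp only [_root_.relabel, comp_apply, Option.map_eq_some_iff] at hu hw
  obtain ⟨z, hz, rfl⟩ := hu
  obtain ⟨z', hz', hzz'⟩ := hw
  rw [π.injective hzz'] at hz'
  exact hp _ _ (φ.symm.map_adj_iff.2 hadj) z hz hz'

lemma GMove.relabel [DecidableEq α] {c c' : α → Option (Fin k)} (h : GMove G c c')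
    (φ : G ≃g G) (π : Equiv.Perm (Fin k)) : GMove G (relabel φ π c) (relabel φ π c') := by
  obtain ⟨v, x, hv, rfl, hp⟩ := h
  exact ⟨φ v, π x, by simp [_root_.relabel, hv], relabel_update φ π c v x, hp.relabel φ π⟩

lemma GMoveSeq.relabel [DecidableEq α] (φ : G ≃g G) (π : Equiv.Perm (Fin k)) :
    ∀ {n : ℕ} {c c' : α → Option (Fin k)}, GMoveSeq G n c c' →
      GMoveSeq G n (relabel φ π c) (relabel φ π c')
  | 0, _, _, h => congrArg (_root_.relabel φ π) h
  | _ + 1, _, _, ⟨_, hm, hs⟩ => ⟨_, hm.relabel φ π, GMoveSeq.relabel φ π hs⟩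

lemma GTurn.relabel [Fintype α] [DecidableEq α] {t : ℕ} {c c' : α → Option (Fin k)}
    (h : GTurn G t c c') (φ : G ≃g G) (π : Equiv.Perm (Fin k)) :
    GTurn G t (relabel φ π c) (relabel φ π c') := by
  rw [GTurn, uncoloured_relabel]
  exact GMoveSeq.relabel φ π h

lemma AliceWins.relabel [Fintype α] [DecidableEq α] {a b : ℕ} {t : Bool}
    {c : α → Option (Fin k)} (h : AliceWins G k a b t c) (φ : G ≃g G)
    (π : Equiv.Perm (Fin k)) : AliceWins G k a b t (relabel φ π c) := by
  induction h with
  | done t c h0 => exact .done t _ (by rwa [uncoloured_relabel])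
  | aliceTurn c c' hu ht _ ih =>
    exact .aliceTurn _ _ (by rwa [uncoloured_relabel]) (ht.relabel φ π) ih
  | bobTurn c hu hex _ ih =>
    obtain ⟨c', ht⟩ := hex
    refine .bobTurn _ (by rwa [uncoloured_relabel]) ⟨_, ht.relabel φ π⟩ fun d hd => ?_
    have hd' := hd.relabel φ.symm π.symm
    rw [relabel_symm_relabel] at hd'
    simpa only [relabel_relabel_symm] using ih _ hd'

end Relabel

instance SimpleGraph.boxProd.decidableRel {β γ : Type*} [DecidableEq β] [DecidableEq γ]
    {G : SimpleGraph β} {H : SimpleGraph γ} [DecidableRel G.Adj] [DecidableRel H.Adj] :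
    DecidableRel (G.boxProd H).Adj :=
  fun _ _ => decidable_of_iff' _ boxProd_adj

def SimpleGraph.Iso.boxProdCongr {β β' γ γ' : Type*} {G : SimpleGraph β}
    {G' : SimpleGraph β'} {H : SimpleGraph γ} {H' : SimpleGraph γ'} (φ : G ≃g G')
    (ψ : H ≃g H') : G.boxProd H ≃g G'.boxProd H' :=
  ⟨φ.toEquiv.prodCongr ψ.toEquiv, by simp [boxProd_adj, Iso.map_adj_iff]⟩

section Rook

instance rook33.decidableRelAdj : DecidableRel rook33.Adj :=
  inferInstanceAs (DecidableRel ((⊤ : SimpleGraph (Fin 3)).boxProd ⊤).Adj)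

def rookVertices : List (Fin 3 × Fin 3) :=
  List.finRange 3 ×ˢ List.finRange 3

def rookNeighbours (v : Fin 3 × Fin 3) : List (Fin 3 × Fin 3) :=
  [(v.1, v.2 + 1), (v.1, v.2 + 2), (v.1 + 1, v.2), (v.1 + 2, v.2)]

lemma mem_rookVertices : ∀ v, v ∈ rookVertices := by
  simp [rookVertices]

lemma mem_rookNeighbours_iff : ∀ v w, w ∈ rookNeighbours v ↔ rook33.Adj v w := by
  decide

def rookAut (σ τ : Equiv.Perm (Fin 3)) : rook33 ≃g rook33 :=
  Iso.boxProdCongr (Iso.completeGraph σ) (Iso.completeGraph τ)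

variable (k : ℕ) [NeZero k]

def rookOpening : Fin 3 × Fin 3 → Option (Fin k) :=
  update (emptyCol (Fin 3 × Fin 3) k) (0, 0) (some 0)

lemma AliceWins.of_rookOpening {a b : ℕ} (h : AliceWins rook33 k a b true (rookOpening k))
    (v : Fin 3 × Fin 3) (x : Fin k) :
    AliceWins rook33 k a b true (update (emptyCol (Fin 3 × Fin 3) k) v (some x)) := by
  have := h.relabel (rookAut (.swap 0 v.1) (.swap 0 v.2)) (.swap 0 x)
  have hv : rookAut (.swap 0 v.1) (.swap 0 v.2) (0, 0) = v :=
    Prod.ext (Equiv.swap_apply_left _ _) (Equiv.swap_apply_left _ _)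
  rwa [rookOpening, relabel_update, relabel_emptyCol, hv, Equiv.swap_apply_left] at this

lemma aliceWins_rook33_iff_aliceWinsEval :
    AliceWins rook33 k 1 1 false (emptyCol (Fin 3 × Fin 3) k) ↔
      aliceWinsEval rookVertices rookNeighbours 8 true (rookOpening k) = true := by
  have hu : 0 < uncoloured (emptyCol (Fin 3 × Fin 3) k) := by simp [uncoloured_emptyCol]
  have hopen : GMove rook33 (emptyCol (Fin 3 × Fin 3) k) (rookOpening k) := gMove_emptyCol _ _
  rw [aliceWinsEval_iff mem_rookVertices mem_rookNeighbours_iff _ _ _ ?_ hopen.properPartial,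
    aliceWins_false_iff hu]
  · simp only [gTurn_one_iff hu]
    refine ⟨fun h => h.2 _ hopen, fun h => ⟨⟨_, hopen⟩, fun c' hc' => ?_⟩⟩
    obtain ⟨v, x, -, rfl, -⟩ := hc'
    exact h.of_rookOpening k v x
  · have := hopen.uncoloured_add_one
    simp only [uncoloured_emptyCol, Fintype.card_prod, Fintype.card_fin] at this
    omega

end Rook

/-- `χ_{g_B}(K₃ □ K₃) = 4`: Alice has a winning strategy with `4`
colours in the colouring game on `K₃ □ K₃` with Bob moving first, and she has none
(i.e. Bob wins) with `3` colours. -/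
theorem stmt12 :
    AliceWins rook33 4 1 1 false (emptyCol (Fin 3 × Fin 3) 4) ∧
    ¬ AliceWins rook33 3 1 1 false (emptyCol (Fin 3 × Fin 3) 3) := by
  rw [aliceWins_rook33_iff_aliceWinsEval, aliceWins_rook33_iff_aliceWinsEval]
  exact ⟨by decide +kernel, by decide +kernel⟩
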